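/- The mean-value lower bound constant π/4 cannot be improved to 1: there exist an analytic function f : Π⁺ → Π⁺ and a square Q ⊂ Π⁺ centered at a point c such that (1/A(Q))∫_Q |f(z)| dA(z) < |f(c)|. Concretely, for f(z) = exp(((1-z)/(1+z))⁴) (which maps Π⁺ to Π⁺) and Q_t = (1-t,1+t)×(-t,t), there exists t ∈ (0,1/2] with (1/(4t²))∫_{Q_t} |f| dA < 1 = |f(1)|. -/

import Mathlib

/-!
The Cayley transform `(1 - z) / (1 + z)` maps the right half-plane into the unit disk, and `exp`
maps the unit disk into the right half-plane because there `|Im w| < 1 < π / 2`.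

For the mean value, write `z = 1 + u`: then `((1 - z) / (1 + z)) ^ 4 = (u / (2 + u)) ^ 4
= u ^ 4 / 16 + O(‖u‖ ^ 5)`, so `‖f (1 + u)‖ ≤ 1 + Re (u ^ 4) / 16 + O(‖u‖ ^ 5)`. The quartic
`Re ((x + y i) ^ 4) = x ^ 4 - 6 x ^ 2 y ^ 2 + y ^ 4` has integral `-16 t ^ 6 / 15` over
`(-t, t) ^ 2`, so the average of `‖f‖` over `Q_t` is at most `1 + 64 t ^ 5 - t ^ 4 / 60 < 1`
for small `t`.
-/

open MeasureTheory Complex Set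

theorem norm_one_sub_div_one_add_lt_one {z : ℂ} (hz : 0 < z.re) : ‖(1 - z) / (1 + z)‖ < 1 := by
  have hlt : ‖1 - z‖ < ‖1 + z‖ := by
    rw [← sq_lt_sq₀ (norm_nonneg _) (norm_nonneg _), Complex.sq_norm, Complex.sq_norm]
    simp only [normSq_apply, sub_re, add_re, sub_im, add_im, one_re, one_im]
    nlinarith
  rwa [norm_div, div_lt_one ((norm_nonneg _).trans_lt hlt)]

theorem exp_re_pos_of_abs_im_lt {w : ℂ} (hw : |w.im| < Real.pi / 2) : 0 < (exp w).re := by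
  rw [exp_re]
  exact mul_pos (Real.exp_pos _) (Real.cos_pos_of_mem_Ioo (abs_lt.1 hw))

theorem exp_re_pos_of_norm_lt_one {w : ℂ} (hw : ‖w‖ < 1) : 0 < (exp w).re :=
  exp_re_pos_of_abs_im_lt <| (abs_im_le_norm w).trans_lt <| hw.trans <| by
    linarith [Real.pi_gt_three]

theorem div_two_add_pow_four_sub (u : ℂ) (hu : 2 + u ≠ 0) :
    (u / (2 + u)) ^ 4 - u ^ 4 / 16 =
      -(u ^ 5 * ((4 + u) * (8 + 4 * u + u ^ 2))) / (16 * (2 + u) ^ 4) := by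
  field_simp
  ring

theorem three_halves_le_norm_two_add {u : ℂ} (hu : ‖u‖ ≤ 1 / 2) : 3 / 2 ≤ ‖2 + u‖ := by
  have := norm_sub_le (2 + u) u
  simp only [add_sub_cancel_right, norm_ofNat] at this
  linarith

theorem norm_div_two_add_pow_four_le {u : ℂ} (hu : ‖u‖ ≤ 1 / 2) :
    ‖(u / (2 + u)) ^ 4‖ ≤ ‖u‖ ^ 4 / 5 := by
  have h2u : (3 / 2) ^ 4 ≤ ‖2 + u‖ ^ 4 := by gcongr; exact three_halves_le_norm_two_add hu
  rw [div_pow, norm_div, norm_pow, norm_pow]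
  gcongr
  linarith

theorem norm_div_two_add_pow_four_sub_le {u : ℂ} (hu : ‖u‖ ≤ 1 / 2) :
    ‖(u / (2 + u)) ^ 4 - u ^ 4 / 16‖ ≤ ‖u‖ ^ 5 := by
  have h2u := three_halves_le_norm_two_add hu
  have hnum : ‖(4 + u) * (8 + 4 * u + u ^ 2)‖ ≤ 47 := by
    have h₁ : ‖4 + u‖ ≤ 9 / 2 := by
      calc ‖4 + u‖ ≤ ‖(4 : ℂ)‖ + ‖u‖ := norm_add_le _ _
        _ ≤ 9 / 2 := by norm_num; linarith
    have h₂ : ‖8 + 4 * u + u ^ 2‖ ≤ 41 / 4 := by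
      calc ‖8 + 4 * u + u ^ 2‖ ≤ ‖(8 : ℂ)‖ + ‖4 * u‖ + ‖u ^ 2‖ := norm_add₃_le
        _ = 8 + 4 * ‖u‖ + ‖u‖ ^ 2 := by simp
        _ ≤ 41 / 4 := by nlinarith [norm_nonneg u]
    rw [norm_mul]
    nlinarith [norm_nonneg (4 + u), norm_nonneg (8 + 4 * u + u ^ 2)]
  have hden : 81 ≤ ‖16 * (2 + u) ^ 4‖ := by
    rw [norm_mul, norm_pow, Complex.norm_ofNat]
    have : (3 / 2) ^ 4 ≤ ‖2 + u‖ ^ 4 := by gcongr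
    linarith
  rw [div_two_add_pow_four_sub u (norm_pos_iff.1 (by linarith)), norm_div, norm_neg, norm_mul,
    norm_pow, div_le_iff₀ (by linarith)]
  nlinarith [pow_nonneg (norm_nonneg u) 5]

theorem norm_exp_div_two_add_pow_four_le {u : ℂ} (hu : ‖u‖ ≤ 1 / 2) :
    ‖exp ((u / (2 + u)) ^ 4)‖ ≤ 1 + (u ^ 4).re / 16 + 2 * ‖u‖ ^ 5 := by
  set g := (u / (2 + u)) ^ 4
  have hu₀ := norm_nonneg u
  have hg : |g.re| ≤ ‖u‖ ^ 4 / 5 := (abs_re_le_norm g).trans (norm_div_two_add_pow_four_le hu)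
  have hu₁ (n : ℕ) : ‖u‖ ^ n ≤ 1 := pow_le_one₀ hu₀ (by linarith)
  have hg₁ : |g.re| ≤ 1 := by linarith [hu₁ 4]
  have hsq : g.re ^ 2 ≤ ‖u‖ ^ 5 := by
    rw [← sq_abs]
    calc |g.re| ^ 2 ≤ (‖u‖ ^ 4 / 5) ^ 2 := by gcongr
      _ = ‖u‖ ^ 5 * ‖u‖ ^ 3 / 25 := by ring
      _ ≤ ‖u‖ ^ 5 := by nlinarith [pow_nonneg hu₀ 5, hu₁ 3]
  have hre : g.re ≤ (u ^ 4).re / 16 + ‖u‖ ^ 5 := by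
    have := (re_le_norm _).trans (norm_div_two_add_pow_four_sub_le hu)
    simp only [sub_re, div_ofNat_re] at this
    linarith
  rw [norm_exp]
  linarith [(abs_le.1 (Real.abs_exp_sub_one_sub_id_le hg₁)).2]

theorem norm_exp_cayley_pow_four_le_on_square {t : ℝ} (ht : t ≤ 1 / 4) {p : ℝ × ℝ}
    (hp : p ∈ Ioo (-t) t ×ˢ Ioo (-t) t) :
    ‖exp (((1 - (1 + ⟨p.1, p.2⟩)) / (1 + (1 + ⟨p.1, p.2⟩))) ^ 4)‖ ≤
      1 + 64 * t ^ 5 + (p.1 ^ 4 - 6 * p.1 ^ 2 * p.2 ^ 2 + p.2 ^ 4) / 16 := by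
  obtain ⟨⟨hx₁, hx₂⟩, hy₁, hy₂⟩ := hp
  set u : ℂ := ⟨p.1, p.2⟩
  have hu : ‖u‖ ≤ 2 * t := (norm_le_abs_re_add_abs_im u).trans <| by
    simp only [u]
    linarith [abs_lt.2 ⟨hx₁, hx₂⟩, abs_lt.2 ⟨hy₁, hy₂⟩]
  have hu₅ : ‖u‖ ^ 5 ≤ (2 * t) ^ 5 := by gcongr
  have hre : (u ^ 4).re = p.1 ^ 4 - 6 * p.1 ^ 2 * p.2 ^ 2 + p.2 ^ 4 := by
    simp only [pow_succ, pow_zero, one_mul, mul_re, mul_im, u]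
    ring
  have hcayley : ((1 - (1 + u)) / (1 + (1 + u))) ^ 4 = (u / (2 + u)) ^ 4 := by ring
  rw [hcayley]
  linarith [norm_exp_div_two_add_pow_four_le (hu.trans (by linarith))]

theorem setIntegral_square_eq {E : Type*} [NormedAddCommGroup E] [NormedSpace ℝ E] (F : ℂ → E)
    (c : ℂ) (t : ℝ) :
    ∫ z in {z : ℂ | c.re - t < z.re ∧ z.re < c.re + t ∧ c.im - t < z.im ∧ z.im < c.im + t}, F z =
      ∫ p in Ioo (-t) t ×ˢ Ioo (-t) t, F (c + ⟨p.1, p.2⟩) := by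
  let e : ℝ × ℝ ≃ᵐ ℂ := measurableEquivRealProd.symm.trans (MeasurableEquiv.addLeft c)
  have he : MeasurePreserving e :=
    (measurePreserving_add_left volume c).comp volume_preserving_equiv_real_prod.symm
  rw [← he.setIntegral_preimage_emb e.measurableEmbedding]
  congr 2
  ext p
  simp only [e, mem_preimage, mem_prod, mem_Ioo, mem_ofPred_eq, MeasurableEquiv.trans_apply,
    measurableEquivRealProd_symm_apply, MeasurableEquiv.coe_addLeft, add_re, add_im,
    add_lt_add_iff_left]
  constructor
  · rintro ⟨_, _, _, _⟩
    exact ⟨⟨by linarith, by linarith⟩, by linarith, by linarith⟩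
  · rintro ⟨⟨_, _⟩, _, _⟩
    exact ⟨by linarith, by linarith, by linarith, by linarith⟩

theorem integrableOn_square_of_continuous {f : ℝ × ℝ → ℝ} (hf : Continuous f) (t : ℝ) :
    IntegrableOn f (Ioo (-t) t ×ˢ Ioo (-t) t) :=
  (hf.continuousOn.integrableOn_compact (isCompact_Icc.prod isCompact_Icc)).mono_set
    (prod_mono Ioo_subset_Icc_self Ioo_subset_Icc_self)

theorem integral_Ioo_even_quartic (A B C r : ℝ) (hr : 0 ≤ r) :
    ∫ y in Ioo (-r) r, (A + B * y ^ 2 + C * y ^ 4) =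
      2 * r * A + 2 * r ^ 3 / 3 * B + 2 * r ^ 5 / 5 * C := by
  rw [← integral_Ioc_eq_integral_Ioo, ← intervalIntegral.integral_of_le (by linarith),
    intervalIntegral.integral_add, intervalIntegral.integral_add]
  · simp only [intervalIntegral.integral_const, sub_neg_eq_add, smul_eq_mul,
      intervalIntegral.integral_const_mul, integral_pow, Nat.reduceAdd, Nat.cast_ofNat]
    ring
  all_goals exact Continuous.intervalIntegrable (by fun_prop) _ _

theorem setIntegral_square_quartic (a t : ℝ) (ht : 0 ≤ t) :
    ∫ p in Ioo (-t) t ×ˢ Ioo (-t) t, (a + (p.1 ^ 4 - 6 * p.1 ^ 2 * p.2 ^ 2 + p.2 ^ 4) / 16) =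
      4 * t ^ 2 * a - t ^ 6 / 15 := by
  have hinner (x : ℝ) : ∫ y in Ioo (-t) t, (a + (x ^ 4 - 6 * x ^ 2 * y ^ 2 + y ^ 4) / 16) =
      2 * t * (a + t ^ 4 / 80) + -(t ^ 3 / 4) * x ^ 2 + t / 8 * x ^ 4 := calc
    _ = ∫ y in Ioo (-t) t, ((a + x ^ 4 / 16) + -(3 * x ^ 2 / 8) * y ^ 2 + 1 / 16 * y ^ 4) := by
      congr 1; ext y; ring
    _ = _ := by rw [integral_Ioo_even_quartic _ _ _ _ ht]; ring
  rw [Measure.volume_eq_prod,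
    setIntegral_prod _ (integrableOn_square_of_continuous (by fun_prop) t)]
  simp only [hinner, integral_Ioo_even_quartic _ _ _ _ ht]
  ring

theorem average_norm_exp_cayley_pow_four_lt_one {t : ℝ} (ht₀ : 0 < t) (ht : t < 1 / 3840) :
    (1 / (4 * t ^ 2)) * ∫ z in {z : ℂ | 1 - t < z.re ∧ z.re < 1 + t ∧ -t < z.im ∧ z.im < t},
      ‖exp (((1 - z) / (1 + z)) ^ 4)‖ < 1 := by
  have hsq := setIntegral_square_eq (fun z ↦ ‖exp (((1 - z) / (1 + z)) ^ 4)‖) 1 t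
  simp only [one_re, one_im, zero_sub, zero_add] at hsq
  rw [hsq]
  have hle := integral_mono_of_nonneg (ae_of_all _ fun _ ↦ norm_nonneg _)
    (integrableOn_square_of_continuous (by fun_prop) t)
    ((ae_restrict_iff' (measurableSet_Ioo.prod measurableSet_Ioo)).2 <| ae_of_all _ fun p hp ↦
      norm_exp_cayley_pow_four_le_on_square (by linarith) hp)
  rw [setIntegral_square_quartic _ _ ht₀.le] at hle
  calc _ ≤ (1 / (4 * t ^ 2)) * (4 * t ^ 2 * (1 + 64 * t ^ 5) - t ^ 6 / 15) := by gcongr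
    _ = 1 - t ^ 4 * (1 / 60 - 64 * t) := by field_simp; ring
    _ < 1 := by have := pow_pos ht₀ 4; nlinarith

/-- The constant π/4 in the mean-value lower bound cannot be improved to 1:
f(z) = exp(((1-z)/(1+z))⁴) maps Π⁺ into Π⁺, and for some square
Q_t = (1-t,1+t)×(-t,t) centered at 1 with 0 < t ≤ 1/2 the average of |f| over Q_t
is strictly less than 1 = |f(1)|. -/
theorem stmt_14 :
    (∀ z : ℂ, 0 < z.re → 0 < (Complex.exp (((1 - z) / (1 + z)) ^ 4)).re) ∧
      ∃ t : ℝ, 0 < t ∧ t ≤ 1 / 2 ∧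
        (1 / (4 * t ^ 2)) *
            ∫ z in {z : ℂ | 1 - t < z.re ∧ z.re < 1 + t ∧ -t < z.im ∧ z.im < t},
              ‖Complex.exp (((1 - z) / (1 + z)) ^ 4)‖ <
          1 := by
  refine ⟨fun z hz ↦ exp_re_pos_of_norm_lt_one ?_, 1 / 4000, by norm_num, by norm_num,
    average_norm_exp_cayley_pow_four_lt_one (by norm_num) (by norm_num)⟩
  rw [norm_pow]
  exact pow_lt_one₀ (norm_nonneg _) (norm_one_sub_div_one_add_lt_one hz) (by norm_num)
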